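/- Let ζ be a real random variable with continuous CDF F, and ζ₁,...,ζₙ i.i.d. copies. Fix α ∈ (0,1), ε ∈ (0, 1-α), and αₙ ∈ (α, α+ε). Then P(F(F_n^{-1}(αₙ)) > α + ε) ≤ exp(-n(α + ε - αₙ)²/(2(α + ε))). -/

import Mathlib

/-!
Let `z` be the `(α + ε)`-quantile of `F`, which exists because `F` is continuous. If
`F(F_n⁻¹(αₙ)) > α + ε` then `F_n⁻¹(αₙ) > z`, hence `F_n(z) < αₙ`: at most `n αₙ` sample points
lie in `(-∞, z]`. Their number is a sum of `n` independent Bernoulli(`α + ε`) indicators, and the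
Chernoff bound for its lower tail at `t = log (αₙ / (α + ε))`, together with `1 + x ≤ eˣ` and
`(u - u⁻¹) / 2 ≤ log u` on `(0, 1]`, gives the exponent.
-/

open MeasureTheory ProbabilityTheory

/-- The empirical distribution function `F_n(z) = (1/n) ∑ᵢ 1{ζᵢ ≤ z}`. -/
noncomputable def empCDF (n : ℕ) (ζ : Fin n → ℝ) (z : ℝ) : ℝ :=
  ((Finset.univ.filter (fun i => ζ i ≤ z)).card : ℝ) / n

/-- The empirical quantile function `F_n^{-1}(γ) = inf {z | F_n(z) ≥ γ}`. -/
noncomputable def empQuantile (n : ℕ) (ζ : Fin n → ℝ) (γ : ℝ) : ℝ :=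
  sInf {z : ℝ | γ ≤ empCDF n ζ z}

open Real Set Filter

lemma sinh_log_le_log {u : ℝ} (hu0 : 0 < u) (hu1 : u ≤ 1) : (u - u⁻¹) / 2 ≤ log u := by
  rw [← sinh_log hu0]
  exact sinh_le_self_iff.2 (log_nonpos hu0.le hu1)

lemma sub_sub_mul_log_div_le {p q : ℝ} (hq : 0 < q) (hqp : q ≤ p) :
    q - p - q * log (q / p) ≤ -(p - q) ^ 2 / (2 * p) := by
  have hp : 0 < p := hq.trans_le hqp
  have h := mul_le_mul_of_nonneg_left
    (sinh_log_le_log (div_pos hq hp) ((div_le_one hp).2 hqp)) hq.le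
  have hl : q * ((q / p - (q / p)⁻¹) / 2) = q ^ 2 / (2 * p) - p / 2 := by
    field_simp
  have hr : -(p - q) ^ 2 / (2 * p) = q - p - (q ^ 2 / (2 * p) - p / 2) := by
    field_simp
    ring
  linarith

lemma exp_mul_indicator_one {α : Type*} (A : Set α) (t : ℝ) :
    (fun x => exp (t * A.indicator 1 x)) = fun x => 1 + A.indicator (fun _ => exp t - 1) x := by
  ext x
  by_cases hx : x ∈ A <;> simp [hx]

section Chernoff

variable {Ω : Type*} [MeasurableSpace Ω] {P : Measure Ω}

lemma mgf_indicator_one [IsProbabilityMeasure P] {A : Set Ω} (hA : MeasurableSet A) (t : ℝ) :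
    mgf (A.indicator 1) P t = 1 + (exp t - 1) * P.real A := by
  rw [mgf, exp_mul_indicator_one, integral_add (integrable_const _)
    ((integrable_const _).indicator hA), integral_const, integral_indicator_const _ hA]
  simp [mul_comm]

lemma mgf_indicator_one_le [IsProbabilityMeasure P] {A : Set Ω} (hA : MeasurableSet A) (t : ℝ) :
    mgf (A.indicator 1) P t ≤ exp ((exp t - 1) * P.real A) := by
  rw [mgf_indicator_one hA, add_comm]
  exact add_one_le_exp _

theorem measureReal_sum_indicator_le_le_exp {ι : Type*} [Fintype ι] {A : ι → Set Ω}
    (hA : ∀ i, MeasurableSet (A i)) (hindep : iIndepFun (fun i => (A i).indicator (1 : Ω → ℝ)) P)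
    {p q : ℝ} (hP : ∀ i, P.real (A i) = p) (hq : 0 < q) (hqp : q ≤ p) :
    P.real {ω | ∑ i, (A i).indicator 1 ω ≤ Fintype.card ι * q} ≤
      exp (-(Fintype.card ι) * (p - q) ^ 2 / (2 * p)) := by
  have := hindep.isProbabilityMeasure
  have hp : 0 < p := hq.trans_le hqp
  set n := Fintype.card ι with hn
  set t := log (q / p)
  have het : (exp t - 1) * p = q - p := by
    rw [exp_log (div_pos hq hp)]
    field_simp
  have hmeas i : Measurable ((A i).indicator (1 : Ω → ℝ)) := measurable_const.indicator (hA i)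
  have hint : Integrable (fun ω => exp (t * (∑ i, (A i).indicator 1) ω)) P :=
    hindep.integrable_exp_mul_sum hmeas fun i _ => by
      rw [exp_mul_indicator_one]
      exact (integrable_const _).add ((integrable_const _).indicator (hA i))
  calc P.real {ω | ∑ i, (A i).indicator 1 ω ≤ n * q}
      = P.real {ω | (∑ i, (A i).indicator 1) ω ≤ n * q} := by simp only [Finset.sum_apply]
    _ ≤ exp (-t * (n * q)) * mgf (∑ i, (A i).indicator 1) P t :=
        measure_le_le_exp_mul_mgf _ (log_nonpos (div_pos hq hp).le ((div_le_one hp).2 hqp)) hint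
    _ ≤ exp (-t * (n * q)) * ∏ _i : ι, exp (q - p) := by
        rw [hindep.mgf_sum hmeas]
        gcongr with i
        · exact fun _ _ => mgf_nonneg
        · simpa only [hP, het] using mgf_indicator_one_le (P := P) (hA i) t
    _ = exp (n * (q - p - q * t)) := by
        rw [Finset.prod_const, Finset.card_univ, ← hn, ← exp_nat_mul, ← exp_add]
        congr 1
        ring
    _ ≤ exp (-n * (p - q) ^ 2 / (2 * p)) := by
        rw [exp_le_exp]
        refine (mul_le_mul_of_nonneg_left (sub_sub_mul_log_div_le hq hqp) n.cast_nonneg).trans_eq ?_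
        ring

end Chernoff

lemma exists_cdf_eq {μ : Measure ℝ} [IsProbabilityMeasure μ] (hc : Continuous (cdf μ))
    {p : ℝ} (hp : p ∈ Ioo 0 1) : ∃ z, cdf μ z = p :=
  mem_range_of_exists_le_of_exists_ge hc
    ((tendsto_cdf_atBot μ).eventually (eventually_le_nhds hp.1)).exists
    ((tendsto_cdf_atTop μ).eventually (eventually_ge_nhds hp.2)).exists

lemma natCast_mul_empCDF (n : ℕ) (x : Fin n → ℝ) (z : ℝ) :
    (n : ℝ) * empCDF n x z = ∑ i, (Iic z).indicator 1 (x i) := by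
  rcases n.eq_zero_or_pos with rfl | hn
  · simp
  · rw [empCDF, mul_div_cancel₀ _ (Nat.cast_pos (α := ℝ) |>.2 hn).ne']
    simp [Set.indicator_apply, Finset.sum_boole]

lemma empCDF_eq_zero_of_forall_lt {n : ℕ} {x : Fin n → ℝ} {z : ℝ} (h : ∀ i, z < x i) :
    empCDF n x z = 0 := by
  simp [empCDF, Finset.filter_eq_empty_iff.2 fun i _ => (h i).not_ge]

lemma bddBelow_setOf_le_empCDF {n : ℕ} (x : Fin n → ℝ) {γ : ℝ} (hγ : 0 < γ) :
    BddBelow {z | γ ≤ empCDF n x z} := by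
  obtain ⟨b, hb⟩ := (finite_range x).bddBelow
  refine ⟨b, fun z (hz : γ ≤ empCDF n x z) => le_of_not_gt fun hzb => hz.not_gt ?_⟩
  rw [empCDF_eq_zero_of_forall_lt fun i => hzb.trans_le (hb (mem_range_self i))]
  exact hγ

lemma empCDF_lt_of_lt_empQuantile {n : ℕ} {x : Fin n → ℝ} {γ z : ℝ} (hγ : 0 < γ)
    (h : z < empQuantile n x γ) : empCDF n x z < γ :=
  lt_of_not_ge fun hz => h.not_ge (csInf_le (bddBelow_setOf_le_empCDF x hγ) hz)

theorem mass_overshoot_bound_general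
    {Ω : Type*} [MeasurableSpace Ω] (P : Measure Ω) [IsProbabilityMeasure P]
    (n : ℕ) (ζ : Fin n → Ω → ℝ) (hmeas : ∀ i, Measurable (ζ i))
    (hindep : iIndepFun ζ P)
    (μ : Measure ℝ) (hident : ∀ i, P.map (ζ i) = μ)
    (F : ℝ → ℝ) (hF : ∀ z, F z = (μ (Set.Iic z)).toReal) (hFcont : Continuous F)
    (α ε αn : ℝ) (hα : α ∈ Set.Ioo (0 : ℝ) 1) (hε : ε ∈ Set.Ioo 0 (1 - α))
    (hαn : αn ∈ Set.Ioo α (α + ε)) :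
    (P {ω | α + ε < F (empQuantile n (fun i => ζ i ω) αn)}).toReal ≤
      Real.exp (-(n : ℝ) * (α + ε - αn) ^ 2 / (2 * (α + ε))) := by
  obtain rfl | hn := n.eq_zero_or_pos
  · simp only [CharP.cast_eq_zero, neg_zero, zero_mul, zero_div, Real.exp_zero]
    exact measureReal_le_one
  have hαn0 : 0 < αn := hα.1.trans hαn.1
  have : IsProbabilityMeasure μ :=
    hident ⟨0, hn⟩ ▸ Measure.isProbabilityMeasure_map (hmeas _).aemeasurable
  obtain rfl : F = cdf μ := funext fun z => by rw [hF, cdf_eq_real]; rfl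
  obtain ⟨z, hz⟩ :=
    exists_cdf_eq hFcont (p := α + ε) ⟨by linarith [hα.1, hε.1], by linarith [hε.2]⟩
  have hA i : MeasurableSet (ζ i ⁻¹' Iic z) := hmeas i measurableSet_Iic
  have hPA i : P.real (ζ i ⁻¹' Iic z) = α + ε := by
    rw [← hz, cdf_eq_real, measureReal_def, ← Measure.map_apply (hmeas i) measurableSet_Iic,
      hident]
    rfl
  have hindepA : iIndepFun (fun i => (ζ i ⁻¹' Iic z).indicator (1 : Ω → ℝ)) P :=
    hindep.comp (fun _ => (Iic z).indicator 1) fun _ => measurable_const.indicator measurableSet_Iic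
  have hsub : {ω | α + ε < cdf μ (empQuantile n (fun i => ζ i ω) αn)} ⊆
      {ω | ∑ i, (ζ i ⁻¹' Iic z).indicator 1 ω ≤ n * αn} := by
    intro ω hω
    have hzQ : z < empQuantile n (fun i => ζ i ω) αn := (monotone_cdf μ).reflect_lt (hz ▸ hω)
    calc ∑ i, (ζ i ⁻¹' Iic z).indicator 1 ω = n * empCDF n (fun i => ζ i ω) z :=
          (natCast_mul_empCDF n _ z).symm
      _ ≤ n * αn := by
          gcongr
          exact (empCDF_lt_of_lt_empQuantile hαn0 hzQ).le
  calc (P {ω | α + ε < cdf μ (empQuantile n (fun i => ζ i ω) αn)}).toReal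
      ≤ P.real {ω | ∑ i, (ζ i ⁻¹' Iic z).indicator 1 ω ≤ n * αn} := measureReal_mono hsub
    _ ≤ _ := by
      simpa using measureReal_sum_indicator_le_le_exp hA hindepA hPA hαn0 hαn.2.le

/-- `P(F(F_n^{-1}(αₙ)) > α + ε) ≤ exp(-n(α + ε - αₙ)²/(2(α + ε)))` for an i.i.d. sample with
continuous CDF `F`, `α ∈ (0,1)`, `ε ∈ (0,1-α)` and `αₙ ∈ (α, α+ε)`. -/
theorem mass_overshoot_bound
    {Ω : Type*} [MeasurableSpace Ω] (P : Measure Ω) [IsProbabilityMeasure P]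
    (n : ℕ) (hn : 0 < n) (ζ : Fin n → Ω → ℝ) (hmeas : ∀ i, Measurable (ζ i))
    (hindep : iIndepFun ζ P)
    (μ : Measure ℝ) (hident : ∀ i, P.map (ζ i) = μ)
    (F : ℝ → ℝ) (hF : ∀ z, F z = (μ (Set.Iic z)).toReal) (hFcont : Continuous F)
    (α ε αn : ℝ) (hα : α ∈ Set.Ioo (0 : ℝ) 1) (hε : ε ∈ Set.Ioo 0 (1 - α))
    (hαn : αn ∈ Set.Ioo α (α + ε)) :
    (P {ω | α + ε < F (empQuantile n (fun i => ζ i ω) αn)}).toReal ≤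
      Real.exp (-(n : ℝ) * (α + ε - αn) ^ 2 / (2 * (α + ε))) :=
  mass_overshoot_bound_general P n ζ hmeas hindep μ hident F hF hFcont α ε αn hα hε hαn
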